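/- arXiv:1503.02919 — 3 statements merged into one kernel-verified Lean document; each statement's English description precedes it below -/
import Mathlib

section
/- Let Σ be a smooth fan. The set {φ_k : k ∈ N ∩ |Σ|}, where φ_k = Π_{i=1}^m u_i^{Ψ_i(k)}, is a ℂ-basis of the Stanley–Reisner type ring ℂ[u_1,…,u_m]/I_SR, where I_SR is the ideal generated by the monomials Π_{i∈I} u_i for subsets I ⊆ {1,…,m} such that σ_I is not a cone of Σ. -/
open Finset
open scoped Classical

/-- Membership in the cone spanned by the rays indexed by `I`,
with nonnegative integer coefficients. -/
def InCone {D m : ℕ} (b : Fin m → Fin D → ℤ) (I : Finset (Fin m)) (k : Fin D → ℤ) : Prop :=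
  ∃ c : Fin m → ℕ, (∀ i, c i ≠ 0 → i ∈ I) ∧ k = ∑ i, (c i : ℤ) • b i

/-- A smooth (simplicial, with smooth cones) fan in `ℤ^D`, recorded combinatorially:
`b` are the primitive ray generators, `cones` the index sets of cones. -/
structure SmoothFan (D m : ℕ) where
  b : Fin m → Fin D → ℤ
  cones : Finset (Finset (Fin m))
  empty_mem : ∅ ∈ cones
  ray_mem : ∀ i : Fin m, {i} ∈ cones
  downward : ∀ I ∈ cones, ∀ J ⊆ I, J ∈ cones
  smooth : ∀ I ∈ cones,
    LinearIndependent ℚ (fun i : {x // x ∈ I} => fun j => (b i.1 j : ℚ))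
  inter : ∀ I ∈ cones, ∀ J ∈ cones, ∀ k, InCone b I k → InCone b J k → InCone b (I ∩ J) k
  convex : ∀ k l, (∃ I ∈ cones, InCone b I k) → (∃ J ∈ cones, InCone b J l) →
      ∃ K ∈ cones, InCone b K (k + l)

/-- `k` is a lattice point of the support `|Σ|` of the fan. -/
def SmoothFan.InSupport {D m : ℕ} (F : SmoothFan D m) (k : Fin D → ℤ) : Prop :=
  ∃ I ∈ F.cones, InCone F.b I k

/-- The coefficient vector `Ψ(k) ∈ (ℤ_{≥0})^m` of a lattice point of the support. -/
noncomputable def SmoothFan.Psi {D m : ℕ} (F : SmoothFan D m) (k : Fin D → ℤ) : Fin m → ℕ :=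
  if h : ∃ c : Fin m → ℕ, (∃ I ∈ F.cones, ∀ i, c i ≠ 0 → i ∈ I) ∧
      k = ∑ i, (c i : ℤ) • F.b i
  then h.choose else 0

/-- `d(k,l) = Ψ(k) + Ψ(l) − Ψ(k+l)`. -/
noncomputable def SmoothFan.dEff {D m : ℕ} (F : SmoothFan D m) (k l : Fin D → ℤ) :
    Fin m → ℤ :=
  fun i => (F.Psi k i : ℤ) + (F.Psi l i : ℤ) - (F.Psi (k + l) i : ℤ)

/-!
`I_SR` is a monomial ideal, so the quotient has as basis the monomials divisible by none of its
generators `∏_{i ∈ I} u_i`; as the cones of `Σ` are closed under taking faces, these are the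
monomials whose support is a cone. Smoothness makes the coefficients of a lattice point of a cone
with respect to its rays unique, and the intersection axiom extends this across cones, so `Ψ` is a
bijection from the lattice points of `|Σ|` onto exactly these exponent vectors.
-/

namespace Finsupp

theorem sum_single_one_le_iff {α : Type*} {I : Finset α} {v : α →₀ ℕ} :
    ∑ i ∈ I, single i 1 ≤ v ↔ I ⊆ v.support := by
  simp only [le_def, finsetSum_apply, single_apply, Finset.sum_ite_eq', Finset.subset_iff,
    mem_support_iff]
  refine ⟨fun h i hi => ?_, fun h i => ?_⟩
  · simpa [hi, Nat.one_le_iff_ne_zero] using h i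
  · split_ifs with hi
    · exact Nat.one_le_iff_ne_zero.mpr (h hi)
    · exact Nat.zero_le _

theorem support_mem_iff_forall_not_sum_single_le {α : Type*} {N : Set (Finset α)}
    (hN : IsLowerSet N) (v : α →₀ ℕ) :
    v.support ∈ N ↔ ∀ s ∈ (fun I => ∑ i ∈ I, single i 1) '' Nᶜ, ¬ s ≤ v := by
  simp only [Set.forall_mem_image, Set.mem_compl_iff, sum_single_one_le_iff]
  exact ⟨fun hv I hI hIv => hI (hN hIv hv), fun h => not_not.mp fun hv => h hv subset_rfl⟩

end Finsupp

namespace MvPolynomial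

theorem prod_X_eq_monomial {σ R : Type*} [CommSemiring R] (I : Finset σ) :
    ∏ i ∈ I, X i = monomial (∑ i ∈ I, Finsupp.single i 1) (1 : R) := by
  rw [monomial_sum_one]
  rfl

section MonomialIdeal

variable {σ R : Type*} [CommRing R] (S : Set (σ →₀ ℕ))

theorem linearIndependent_mk_monomial_of_forall_not_le :
    LinearIndependent R (fun v : {v : σ →₀ ℕ // ∀ s ∈ S, ¬ s ≤ v} =>
      Ideal.Quotient.mk (Ideal.span ((monomial · (1 : R)) '' S)) (monomial v.1 1)) := by
  set J := Ideal.span ((monomial · (1 : R)) '' S)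
  have hli := (basisMonomials σ R).linearIndependent.comp _ (Subtype.val_injective
    (p := fun v : σ →₀ ℕ => ∀ s ∈ S, ¬ s ≤ v))
  rw [coe_basisMonomials] at hli
  refine hli.map (f := (Ideal.Quotient.mkₐ R J).toLinearMap) ?_
  rw [Submodule.disjoint_def]
  intro p hp hker
  have hsupp : ↑p.support ⊆ {v : σ →₀ ℕ | ∀ s ∈ S, ¬ s ≤ v} := by
    rwa [← mem_restrictSupport_iff, restrictSupport_eq_span, Set.image_eq_range]
  have hJ : p ∈ J := Ideal.Quotient.eq_zero_iff_mem.mp hker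
  rw [← support_eq_empty, Finset.eq_empty_iff_forall_notMem]
  intro v hv
  obtain ⟨s, hs, hle⟩ := mem_ideal_span_monomial_image.mp hJ v hv
  exact hsupp hv s hs hle

theorem span_mk_monomial_of_forall_not_le :
    Submodule.span R (Set.range (fun v : {v : σ →₀ ℕ // ∀ s ∈ S, ¬ s ≤ v} =>
      Ideal.Quotient.mk (Ideal.span ((monomial · (1 : R)) '' S)) (monomial v.1 1))) = ⊤ := by
  set J := Ideal.span ((monomial · (1 : R)) '' S)
  have hall :
      Submodule.span R (Set.range fun v => Ideal.Quotient.mk J (monomial v (1 : R))) = ⊤ := by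
    have := Submodule.map_span (Ideal.Quotient.mkₐ R J).toLinearMap
      (Set.range fun v => monomial v (1 : R))
    rw [← Set.range_comp, ← coe_basisMonomials, (basisMonomials σ R).span_eq, Submodule.map_top,
      LinearMap.range_eq_top.mpr (Ideal.Quotient.mkₐ_surjective R J)] at this
    exact this.symm
  rw [eq_top_iff, ← hall, Submodule.span_le]
  rintro _ ⟨v, rfl⟩
  by_cases hv : ∀ s ∈ S, ¬ s ≤ v
  · exact Submodule.subset_span ⟨⟨v, hv⟩, rfl⟩
  · push Not at hv
    have : monomial v (1 : R) ∈ J := by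
      rw [mem_ideal_span_monomial_image]
      intro w hw
      rw [Finset.mem_singleton.mp (support_monomial_subset hw)]
      exact hv
    simp only [Ideal.Quotient.eq_zero_iff_mem.mpr this, SetLike.mem_coe, Submodule.zero_mem]

end MonomialIdeal

end MvPolynomial

namespace SmoothFan

variable {D m : ℕ} (F : SmoothFan D m)

theorem isLowerSet_cones : IsLowerSet (F.cones : Set (Finset (Fin m))) :=
  fun I J hJI hI => F.downward I hI J hJI

theorem linearIndepOn_b {I : Finset (Fin m)} (hI : I ∈ F.cones) : LinearIndepOn ℤ F.b ↑I := by
  have hℚ := (F.smooth I hI).restrict_scalars' ℤ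
  exact LinearIndependent.of_comp ((Algebra.linearMap ℤ ℚ).compLeft (Fin D)) hℚ

theorem eq_of_sum_smul_eq_of_mem {I : Finset (Fin m)} (hI : I ∈ F.cones) {a c : Fin m → ℕ}
    (ha : ∀ i, a i ≠ 0 → i ∈ I) (hc : ∀ i, c i ≠ 0 → i ∈ I)
    (h : ∑ i, (a i : ℤ) • F.b i = ∑ i, (c i : ℤ) • F.b i) : a = c := by
  have hsum : ∀ e : Fin m → ℕ, (∀ i, e i ≠ 0 → i ∈ I) →
      ∑ i ∈ I, (e i : ℤ) • F.b i = ∑ i, (e i : ℤ) • F.b i := fun e he =>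
    Finset.sum_subset (Finset.subset_univ I) fun i _ hi => by
      rw [not_imp_comm.mp (he i) hi, Nat.cast_zero, zero_smul]
  have hcoeff := linearIndepOn_finset_iffₛ.mp (F.linearIndepOn_b hI) (fun i => (a i : ℤ))
    (fun i => c i) (by rw [hsum a ha, hsum c hc, h])
  funext i
  by_cases hi : i ∈ I
  · exact_mod_cast hcoeff i hi
  · rw [not_imp_comm.mp (ha i) hi, not_imp_comm.mp (hc i) hi]

theorem eq_of_sum_smul_eq {I J : Finset (Fin m)} (hI : I ∈ F.cones) (hJ : J ∈ F.cones)
    {a c : Fin m → ℕ} (ha : ∀ i, a i ≠ 0 → i ∈ I) (hc : ∀ i, c i ≠ 0 → i ∈ J)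
    (h : ∑ i, (a i : ℤ) • F.b i = ∑ i, (c i : ℤ) • F.b i) : a = c := by
  obtain ⟨e, he, hae⟩ := F.inter I hI J hJ _ ⟨a, ha, rfl⟩ ⟨c, hc, h⟩
  have hea : a = e := F.eq_of_sum_smul_eq_of_mem hI ha (fun i hi => (mem_inter.mp (he i hi)).1) hae
  have hec : c = e :=
    F.eq_of_sum_smul_eq_of_mem hJ hc (fun i hi => (mem_inter.mp (he i hi)).2) (h ▸ hae)
  rw [hea, hec]

theorem Psi_spec {k : Fin D → ℤ} (hk : F.InSupport k) :
    (∃ I ∈ F.cones, ∀ i, F.Psi k i ≠ 0 → i ∈ I) ∧ k = ∑ i, (F.Psi k i : ℤ) • F.b i := by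
  obtain ⟨I, hI, c, hc, rfl⟩ := hk
  have h : ∃ c' : Fin m → ℕ, (∃ I ∈ F.cones, ∀ i, c' i ≠ 0 → i ∈ I) ∧
      ∑ i, (c i : ℤ) • F.b i = ∑ i, (c' i : ℤ) • F.b i := ⟨c, ⟨I, hI, hc⟩, rfl⟩
  rw [Psi, dif_pos h]
  exact h.choose_spec

theorem Psi_sum_smul {I : Finset (Fin m)} (hI : I ∈ F.cones) {a : Fin m → ℕ}
    (ha : ∀ i, a i ≠ 0 → i ∈ I) : F.Psi (∑ i, (a i : ℤ) • F.b i) = a := by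
  obtain ⟨⟨J, hJ, hPsi⟩, hsum⟩ := F.Psi_spec ⟨I, hI, a, ha, rfl⟩
  exact (F.eq_of_sum_smul_eq hI hJ ha hPsi hsum).symm

noncomputable def psiEquiv :
    {k : Fin D → ℤ // F.InSupport k} ≃ {v : Fin m →₀ ℕ // v.support ∈ F.cones} where
  toFun k := ⟨Finsupp.equivFunOnFinite.symm (F.Psi k.1), by
    obtain ⟨I, hI, hPsi⟩ := (F.Psi_spec k.2).1
    exact F.isLowerSet_cones (fun i hi => hPsi i (Finsupp.mem_support_iff.mp hi)) hI⟩
  invFun v :=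
    ⟨∑ i, (v.1 i : ℤ) • F.b i, v.1.support, v.2, v.1, fun _ => Finsupp.mem_support_iff.mpr, rfl⟩
  left_inv k := Subtype.ext (F.Psi_spec k.2).2.symm
  right_inv v := Subtype.ext <| Finsupp.equivFunOnFinite.injective <|
    F.Psi_sum_smul v.2 fun _ => Finsupp.mem_support_iff.mpr

end SmoothFan

open MvPolynomial in
/-- the classes `φ_k = Π_i u_i^{Ψ_i(k)}`, for `k` ranging over the lattice
points of the support of the smooth fan `Σ`, form a ℂ-basis of the Stanley–Reisner ring
`ℂ[u_1,…,u_m]/I_SR`, where `I_SR` is generated by the square-free monomials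
`Π_{i∈I} u_i` for `I` such that `σ_I` is not a cone of `Σ`. -/
theorem phi_basis_of_SR_ring {D m : ℕ} (F : SmoothFan D m)
    (ISR : Ideal (MvPolynomial (Fin m) ℂ))
    (hISR : ISR = Ideal.span
      {P | ∃ I : Finset (Fin m), I ∉ F.cones ∧ P = ∏ i ∈ I, X i}) :
    LinearIndependent ℂ
      (fun k : {k : Fin D → ℤ // F.InSupport k} =>
        Ideal.Quotient.mk ISR
          (monomial (Finsupp.equivFunOnFinite.symm (F.Psi k.1)) (1 : ℂ))) ∧
    Submodule.span ℂ
      (Set.range (fun k : {k : Fin D → ℤ // F.InSupport k} =>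
        Ideal.Quotient.mk ISR
          (monomial (Finsupp.equivFunOnFinite.symm (F.Psi k.1)) (1 : ℂ)))) = ⊤ := by
  set S := (fun I => ∑ i ∈ I, Finsupp.single i 1) '' (F.cones : Set (Finset (Fin m)))ᶜ
  have hS : ISR = Ideal.span ((monomial · (1 : ℂ)) '' S) := by
    rw [hISR, Set.image_image]
    simp only [← prod_X_eq_monomial]
    congr 1
    ext P
    simp [eq_comm]
  subst hS
  let e := F.psiEquiv.trans <| Equiv.subtypeEquivRight <|
    Finsupp.support_mem_iff_forall_not_sum_single_le F.isLowerSet_cones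
  exact ⟨(linearIndependent_mk_monomial_of_forall_not_le S).comp e e.injective,
    by rw [← span_mk_monomial_of_forall_not_le S, ← e.surjective.range_comp]; rfl⟩
end

section
/- The Gauss–Manin connection ∇_{∂/∂y_k} on GM(F_λ), characterized by the Leibniz rule, ∇_{∂/∂y_k} w^{Ψ(l)}ω = z^{-1} w^{Ψ(k)+Ψ(l)} ω, and flatness, is well-defined: the operator z∇_{∂/∂y_k} preserves the image of (zd + dF_λ∧). Explicitly, z∇_{∂/∂y_k}[(zd + dF_λ∧) w^{Ψ(l)} ω_i] = Q^{d(k,l)} (zd + dF_λ∧) w^{Ψ(k+l)} ω_i. -/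
open Finset
open scoped Classical

/-- The map `ℤ^m → N`, `e_j ↦ b_j` (third arrow of the fan sequence). -/
def SmoothFan.toN {D m : ℕ} (F : SmoothFan D m) (v : Fin m → ℤ) : Fin D → ℤ :=
  ∑ j, v j • F.b j

/-- The set of effective curve classes `L ∩ Σ_{σ_I ∈ Σ} C_I`, where
`C_I = {d ∈ L ⊗ ℚ : d_i ≥ 0 for i ∉ I}`. -/
def SmoothFan.EffSet {D m : ℕ} (F : SmoothFan D m) : Set (Fin m → ℤ) :=
  {v | F.toN v = 0 ∧
    ∃ f : Finset (Fin m) → (Fin m → ℚ),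
      ((fun i => (v i : ℚ)) = ∑ I ∈ F.cones, f I) ∧
      ∀ I ∈ F.cones,
        ((∑ j, f I j • (fun t => (F.b j t : ℚ))) = 0) ∧ (∀ i ∉ I, 0 ≤ f I i)}

/-- `Eff(X_Σ)` as an additive submonoid (the semigroup generated by effective classes). -/
def SmoothFan.EffM {D m : ℕ} (F : SmoothFan D m) : AddSubmonoid (Fin m → ℤ) :=
  AddSubmonoid.closure F.EffSet

/-- `(ℤ_{≥0})^m` as a submonoid of `ℤ^m`. -/
def nonnegM (m : ℕ) : AddSubmonoid (Fin m → ℤ) where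
  carrier := {a | ∀ i, 0 ≤ a i}
  zero_mem' := fun _ => le_rfl
  add_mem' := fun ha hb i => add_nonneg (ha i) (hb i)

/-- The semigroup `M = Eff(X_Σ) + (ℤ_{≥0})^m ⊆ ℤ^m`. -/
def SmoothFan.Mmon {D m : ℕ} (F : SmoothFan D m) : AddSubmonoid (Fin m → ℤ) :=
  F.EffM ⊔ nonnegM m

/-- The semigroup `N ∩ |Σ|` of lattice points of the (convex) support. -/
def SmoothFan.SuppM {D m : ℕ} (F : SmoothFan D m) : AddSubmonoid (Fin D → ℤ) :=
  AddSubmonoid.closure {k | F.InSupport k}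

/-- `β(k) = Ψ(k) − ς(k)`, for a splitting `ς` of the fan sequence. -/
noncomputable def SmoothFan.beta {D m : ℕ} (F : SmoothFan D m)
    (ς : (Fin D → ℤ) →+ (Fin m → ℤ)) (k : Fin D → ℤ) : Fin m → ℤ :=
  (fun i => (F.Psi k i : ℤ)) - ς k

/-- Index of a monomial `Q^q · y^{yexp} · z^{zexp} · λ^{λexp} · x^{xexp}` of the module
`ℂ[z]{M}[[y]][λ]·ω`, written in the topological basis of `w`-monomials
(`x`-exponent `k` with `Q`-prefactor recorded in `q`). -/
structure GMIdx (D m : ℕ) where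
  q : Fin m → ℤ
  y : (Fin D → ℤ) →₀ ℕ
  z : ℕ
  lam : Fin D →₀ ℕ
  x : Fin D → ℤ

namespace GMIdx

variable {D m : ℕ}

/-- Multiplication by `z`. -/
def Zmul (g : GMIdx D m → ℂ) : GMIdx D m → ℂ :=
  fun p => if p.z = 0 then 0 else g {p with z := p.z - 1}

/-- (Free) multiplication by the equivariant parameter `λ_i`. -/
noncomputable def Lmul (i : Fin D) (g : GMIdx D m → ℂ) : GMIdx D m → ℂ :=
  fun p => if p.lam i = 0 then 0 else g {p with lam := p.lam - Finsupp.single i 1}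

/-- Multiplication by `Q^d`. -/
def Qmul (d : Fin m → ℤ) (g : GMIdx D m → ℂ) : GMIdx D m → ℂ :=
  fun p => g {p with q := p.q - d}

/-- Multiplication (shift operator) by `w^{Ψ(k)} = Q^{β(k)} x^k`. -/
noncomputable def Wmul (F : SmoothFan D m) (ς : (Fin D → ℤ) →+ (Fin m → ℤ))
    (k : Fin D → ℤ) (g : GMIdx D m → ℂ) : GMIdx D m → ℂ :=
  fun p => g {p with q := p.q - F.beta ς k, x := p.x - k}

/-- Multiplication by the deformation variable `y_k`. -/
noncomputable def Ymul (k : Fin D → ℤ) (g : GMIdx D m → ℂ) : GMIdx D m → ℂ :=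
  fun p => if p.y k = 0 then 0 else g {p with y := p.y - Finsupp.single k 1}

/-- The logarithmic vector field `x_i ∂/∂x_i` (diagonal on monomials). -/
def Xlog (i : Fin D) (g : GMIdx D m → ℂ) : GMIdx D m → ℂ :=
  fun p => (p.x i : ℂ) * g p

/-- Multiplication by `x_i ∂F/∂x_i = Σ_{k ∈ N∩|Σ|} k_i y_k w^{Ψ(k)}`,
the logarithmic derivative of the universal potential `F(x;y) = Σ_k y_k Q^{β(k)} x^k`. -/
noncomputable def FmulX (F : SmoothFan D m) (ς : (Fin D → ℤ) →+ (Fin m → ℤ))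
    (i : Fin D) (g : GMIdx D m → ℂ) : GMIdx D m → ℂ :=
  fun p => ∑ k ∈ p.y.support,
    if F.InSupport k then
      (k i : ℂ) * g {p with q := p.q - F.beta ς k, y := p.y - Finsupp.single k 1,
                            x := p.x - k}
    else 0

/-- The `i`-th component of the twisted de Rham differential:
`(zd + dF_λ∧)(g ω_i) = (z x_i∂_i g + (x_i∂_i F) g − λ_i g) ω`. -/
noncomputable def Dtw (F : SmoothFan D m) (ς : (Fin D → ℤ) →+ (Fin m → ℤ))
    (i : Fin D) (g : GMIdx D m → ℂ) : GMIdx D m → ℂ :=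
  Zmul (Xlog i g) + FmulX F ς i g - Lmul i g

open scoped Classical in
/-- The delta element supported at one monomial. -/
noncomputable def delta (p₀ : GMIdx D m) : GMIdx D m → ℂ :=
  fun p => if p = p₀ then 1 else 0

/-- The basis element `w^{Ψ(l)} ω`. -/
noncomputable def wB (F : SmoothFan D m) (ς : (Fin D → ℤ) →+ (Fin m → ℤ))
    (l : Fin D → ℤ) : GMIdx D m → ℂ :=
  delta ⟨F.beta ς l, 0, 0, 0, l⟩

/-- The image of the twisted differential `zd + dF_λ∧` (the relations submodule). -/
noncomputable def ImD (F : SmoothFan D m) (ς : (Fin D → ℤ) →+ (Fin m → ℤ)) :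
    Set (GMIdx D m → ℂ) :=
  {h | ∃ g : Fin D → (GMIdx D m → ℂ), h = ∑ j, Dtw F ς j (g j)}

end GMIdx

namespace GMIdx

/-- The formal partial derivative `∂/∂y_k`. -/
noncomputable def Ypartial {D m : ℕ} (k : Fin D → ℤ) (g : GMIdx D m → ℂ) :
    GMIdx D m → ℂ :=
  fun p => ((p.y k + 1 : ℕ) : ℂ) * g {p with y := p.y + Finsupp.single k 1}

/-- `z∇_{∂/∂y_k} = z∂/∂y_k + w^{Ψ(k)}·`, the (rescaled) Gauss–Manin connection. -/
noncomputable def ZNabla {D m : ℕ} (F : SmoothFan D m)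
    (ς : (Fin D → ℤ) →+ (Fin m → ℤ)) (k : Fin D → ℤ) (g : GMIdx D m → ℂ) :
    GMIdx D m → ℂ :=
  Zmul (Ypartial k g) + Wmul F ς k g

end GMIdx

/-!
All operators act on coefficient functions of monomials and are additive, so they live in the ring
`AddMonoid.End (GMIdx D m → ℂ)`. There `z∇_k = z ∂_{y_k} + w^{Ψ(k)}` commutes with each component
`z x_i∂_{x_i} + x_i∂_{x_i}F − λ_i` of the twisted differential: `z` commutes with everything, and
of the remaining pairs only two fail to commute, with equal commutators
`[∂_{y_k}, x_i∂_{x_i}F] = k_i w^{Ψ(k)} = [x_i∂_{x_i}, w^{Ψ(k)}]`.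
Hence `z∇_k` preserves the image of the differential, and on a basis element `∂_{y_k}` vanishes, so
`z∇_k w^{Ψ(l)} = w^{Ψ(k)} w^{Ψ(l)} = Q^{d(k,l)} w^{Ψ(k+l)}`; finally `Q^{d}` commutes with the
differential.
-/

theorem commute_mul_add_mul_add_sub {R : Type*} [Ring R] {z y w x φ l : R}
    (hzy : Commute z y) (hzw : Commute z w) (hzx : Commute z x) (hzφ : Commute z φ)
    (hzl : Commute z l) (hyx : Commute y x) (hyl : Commute y l) (hwφ : Commute w φ)
    (hwl : Commute w l) (h : y * φ - φ * y = x * w - w * x) :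
    Commute (z * y + w) (z * x + φ - l) := by
  have hzyzx : Commute (z * y) (z * x) :=
    ((Commute.refl z).mul_right hzx).mul_left (hzy.symm.mul_right hyx)
  have hzyl : Commute (z * y) l := hzl.mul_left hyl
  have expand : (z * y + w) * (z * x + φ - l) - (z * x + φ - l) * (z * y + w) =
      (z * y * (z * x) - z * x * (z * y)) + (z * y * φ - φ * (z * y)) - (z * y * l - l * (z * y))
        + (w * (z * x) - z * x * w) + (w * φ - φ * w) - (w * l - l * w) := by
    noncomm_ring
  rw [Commute, SemiconjBy, ← sub_eq_zero, expand, hzyzx.eq, hzyl.eq, hwφ.eq, hwl.eq,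
    ← mul_assoc φ, ← hzφ.eq, ← mul_assoc w, ← hzw.eq]
  calc _ = z * ((y * φ - φ * y) - (x * w - w * x)) := by noncomm_ring
    _ = 0 := by rw [h, sub_self, mul_zero]

theorem AddMonoid.End.commute_mk' {M : Type*} [AddCommGroup M] {f g : M → M}
    {hf : ∀ a b, f (a + b) = f a + f b} {hg : ∀ a b, g (a + b) = g a + g b}
    (h : ∀ a, f (g a) = g (f a)) :
    Commute (S := AddMonoid.End M) (AddMonoidHom.mk' f hf) (AddMonoidHom.mk' g hg) :=
  AddMonoidHom.ext h

theorem Finsupp.add_single_tsub_single_of_ne {α : Type*} {a b : α} (hab : a ≠ b)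
    (f : α →₀ ℕ) (n k : ℕ) :
    f + Finsupp.single a n - Finsupp.single b k = f - Finsupp.single b k + Finsupp.single a n := by
  ext j
  simp only [Finsupp.add_apply, Finsupp.tsub_apply, Finsupp.single_apply]
  split_ifs with ha hb
  · exact absurd (ha.trans hb.symm) hab
  all_goals omega

theorem SmoothFan.beta_add_beta {D m : ℕ} (F : SmoothFan D m) (ς : (Fin D → ℤ) →+ (Fin m → ℤ))
    (k l : Fin D → ℤ) : F.beta ς k + F.beta ς l = F.beta ς (k + l) + F.dEff k l := by
  funext j
  simp only [SmoothFan.beta, SmoothFan.dEff, Pi.add_apply, Pi.sub_apply, map_add]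
  ring

namespace GMIdx

variable {D m : ℕ}

section Operators

variable (F : SmoothFan D m) (ς : (Fin D → ℤ) →+ (Fin m → ℤ))

noncomputable def zmulEnd : AddMonoid.End (GMIdx D m → ℂ) :=
  AddMonoidHom.mk' Zmul fun f g => by funext p; simp only [Zmul, Pi.add_apply]; split <;> simp

noncomputable def lmulEnd (i : Fin D) : AddMonoid.End (GMIdx D m → ℂ) :=
  AddMonoidHom.mk' (Lmul i) fun f g => by funext p; simp only [Lmul, Pi.add_apply]; split <;> simp

noncomputable def qmulEnd (d : Fin m → ℤ) : AddMonoid.End (GMIdx D m → ℂ) :=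
  AddMonoidHom.mk' (Qmul d) fun _ _ => rfl

noncomputable def wmulEnd (k : Fin D → ℤ) : AddMonoid.End (GMIdx D m → ℂ) :=
  AddMonoidHom.mk' (Wmul F ς k) fun _ _ => rfl

noncomputable def xlogEnd (i : Fin D) : AddMonoid.End (GMIdx D m → ℂ) :=
  AddMonoidHom.mk' (Xlog i) fun f g => by funext p; simp only [Xlog, Pi.add_apply]; ring

noncomputable def ypartialEnd (k : Fin D → ℤ) : AddMonoid.End (GMIdx D m → ℂ) :=
  AddMonoidHom.mk' (Ypartial k) fun f g => by funext p; simp only [Ypartial, Pi.add_apply]; ring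

noncomputable def fmulXEnd (i : Fin D) : AddMonoid.End (GMIdx D m → ℂ) :=
  AddMonoidHom.mk' (FmulX F ς i) fun f g => by
    funext p
    simp only [FmulX, Pi.add_apply, ← Finset.sum_add_distrib]
    exact Finset.sum_congr rfl fun _ _ => by split <;> ring

noncomputable def znablaEnd (k : Fin D → ℤ) : AddMonoid.End (GMIdx D m → ℂ) :=
  zmulEnd * ypartialEnd k + wmulEnd F ς k

noncomputable def dtwEnd (i : Fin D) : AddMonoid.End (GMIdx D m → ℂ) :=
  zmulEnd * xlogEnd i + fmulXEnd F ς i - lmulEnd i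

theorem coe_znablaEnd (k : Fin D → ℤ) : ⇑(znablaEnd F ς k) = ZNabla F ς k := rfl

variable {F ς}

theorem commute_zmulEnd_ypartialEnd (k : Fin D → ℤ) :
    Commute (zmulEnd : AddMonoid.End (GMIdx D m → ℂ)) (ypartialEnd k) :=
  AddMonoid.End.commute_mk' fun g => funext fun p => by
    by_cases h : p.z = 0 <;> simp [Zmul, Ypartial, h]

theorem commute_zmulEnd_wmulEnd (k : Fin D → ℤ) : Commute zmulEnd (wmulEnd F ς k) :=
  AddMonoid.End.commute_mk' fun g => funext fun p => by
    by_cases h : p.z = 0 <;> simp [Zmul, Wmul, h]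

theorem commute_zmulEnd_xlogEnd (i : Fin D) :
    Commute (zmulEnd : AddMonoid.End (GMIdx D m → ℂ)) (xlogEnd i) :=
  AddMonoid.End.commute_mk' fun g => funext fun p => by
    by_cases h : p.z = 0 <;> simp [Zmul, Xlog, h]

theorem commute_zmulEnd_fmulXEnd (i : Fin D) : Commute zmulEnd (fmulXEnd F ς i) :=
  AddMonoid.End.commute_mk' fun g => funext fun p => by
    by_cases h : p.z = 0 <;> simp [Zmul, FmulX, h]

theorem commute_zmulEnd_lmulEnd (i : Fin D) :
    Commute (zmulEnd : AddMonoid.End (GMIdx D m → ℂ)) (lmulEnd i) :=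
  AddMonoid.End.commute_mk' fun g => funext fun p => by
    by_cases hz : p.z = 0 <;> by_cases hl : p.lam i = 0 <;> simp [Zmul, Lmul, hz, hl]

theorem commute_ypartialEnd_xlogEnd (k : Fin D → ℤ) (i : Fin D) :
    Commute (ypartialEnd k : AddMonoid.End (GMIdx D m → ℂ)) (xlogEnd i) :=
  AddMonoid.End.commute_mk' fun g => funext fun p => by
    simp only [Ypartial, Xlog]; ring

theorem commute_ypartialEnd_lmulEnd (k : Fin D → ℤ) (i : Fin D) :
    Commute (ypartialEnd k : AddMonoid.End (GMIdx D m → ℂ)) (lmulEnd i) :=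
  AddMonoid.End.commute_mk' fun g => funext fun p => by
    by_cases h : p.lam i = 0 <;> simp [Ypartial, Lmul, h]

theorem commute_wmulEnd_fmulXEnd (k : Fin D → ℤ) (i : Fin D) :
    Commute (wmulEnd F ς k) (fmulXEnd F ς i) :=
  AddMonoid.End.commute_mk' fun g => funext fun p => by
    simp only [Wmul, FmulX]
    exact Finset.sum_congr rfl fun k' _ => by
      split
      · rw [sub_right_comm p.q (F.beta ς k) (F.beta ς k'), sub_right_comm p.x k k']
      · rfl

theorem commute_wmulEnd_lmulEnd (k : Fin D → ℤ) (i : Fin D) :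
    Commute (wmulEnd F ς k) (lmulEnd i) :=
  AddMonoid.End.commute_mk' fun g => funext fun p => by
    by_cases h : p.lam i = 0 <;> simp [Wmul, Lmul, h]

theorem commute_qmulEnd_zmulEnd (d : Fin m → ℤ) :
    Commute (qmulEnd d : AddMonoid.End (GMIdx D m → ℂ)) zmulEnd :=
  AddMonoid.End.commute_mk' fun g => funext fun p => by
    by_cases h : p.z = 0 <;> simp [Qmul, Zmul, h]

theorem commute_qmulEnd_xlogEnd (d : Fin m → ℤ) (i : Fin D) :
    Commute (qmulEnd d : AddMonoid.End (GMIdx D m → ℂ)) (xlogEnd i) :=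
  AddMonoid.End.commute_mk' fun _ => rfl

theorem commute_qmulEnd_fmulXEnd (d : Fin m → ℤ) (i : Fin D) :
    Commute (qmulEnd d) (fmulXEnd F ς i) :=
  AddMonoid.End.commute_mk' fun g => funext fun p => by
    simp only [Qmul, FmulX]
    exact Finset.sum_congr rfl fun k' _ => by
      split
      · rw [sub_right_comm p.q d (F.beta ς k')]
      · rfl

theorem commute_qmulEnd_lmulEnd (d : Fin m → ℤ) (i : Fin D) :
    Commute (qmulEnd d : AddMonoid.End (GMIdx D m → ℂ)) (lmulEnd i) :=
  AddMonoid.End.commute_mk' fun g => funext fun p => by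
    by_cases h : p.lam i = 0 <;> simp [Qmul, Lmul, h]

variable (F ς) in
noncomputable def fmulXSummand (i : Fin D) (g : GMIdx D m → ℂ) (p : GMIdx D m)
    (k : Fin D → ℤ) : ℂ :=
  if F.InSupport k then
    (k i : ℂ) * g {p with q := p.q - F.beta ς k, y := p.y - Finsupp.single k 1, x := p.x - k}
  else 0

theorem FmulX_apply (i : Fin D) (g : GMIdx D m → ℂ) (p : GMIdx D m) :
    FmulX F ς i g p = ∑ k ∈ p.y.support, fmulXSummand F ς i g p k := rfl

theorem fmulXSummand_Ypartial_of_ne {k k' : Fin D → ℤ} (hne : k' ≠ k) (i : Fin D)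
    (g : GMIdx D m → ℂ) (p : GMIdx D m) :
    fmulXSummand F ς i (Ypartial k g) p k' =
      ((p.y k + 1 : ℕ) : ℂ) * fmulXSummand F ς i g {p with y := p.y + Finsupp.single k 1} k' := by
  have hy : (p.y - Finsupp.single k' 1 : (Fin D → ℤ) →₀ ℕ) k = p.y k := by simp [hne]
  simp only [fmulXSummand, Ypartial, hy, Finsupp.add_single_tsub_single_of_ne hne.symm]
  split <;> ring

theorem fmulXSummand_add_single_self {k : Fin D → ℤ} (hk : F.InSupport k) (i : Fin D)
    (g : GMIdx D m → ℂ) (p : GMIdx D m) :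
    fmulXSummand F ς i g {p with y := p.y + Finsupp.single k 1} k = k i * Wmul F ς k g p := by
  simp only [fmulXSummand, if_pos hk, add_tsub_cancel_right, Wmul]

theorem fmulXSummand_Ypartial_self {k : Fin D → ℤ} (hk : F.InSupport k) (i : Fin D)
    (g : GMIdx D m → ℂ) {p : GMIdx D m} (hp : p.y k ≠ 0) :
    fmulXSummand F ς i (Ypartial k g) p k = p.y k * (k i * Wmul F ς k g p) := by
  have hle : Finsupp.single k 1 ≤ p.y := Finsupp.single_le_iff.2 (Nat.one_le_iff_ne_zero.2 hp)
  have hy : (p.y - Finsupp.single k 1 : (Fin D → ℤ) →₀ ℕ) k + 1 = p.y k := by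
    simp only [Finsupp.tsub_apply, Finsupp.single_eq_same]; omega
  simp only [fmulXSummand, if_pos hk, Ypartial, hy, tsub_add_cancel_of_le hle, Wmul]
  ring

-- If `p.y k = 0`, the `k`-th term is missing from the sum defining `FmulX`; the factor `p.y k`
-- accounts for that uniformly.
theorem FmulX_Ypartial_apply {k : Fin D → ℤ} (hk : F.InSupport k) (i : Fin D)
    (g : GMIdx D m → ℂ) (p : GMIdx D m) :
    FmulX F ς i (Ypartial k g) p = p.y k * (k i * Wmul F ς k g p) +
      ∑ k' ∈ p.y.support.erase k, ((p.y k + 1 : ℕ) : ℂ) *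
        fmulXSummand F ς i g {p with y := p.y + Finsupp.single k 1} k' := by
  rw [FmulX_apply]
  by_cases hp : k ∈ p.y.support
  · rw [← Finset.add_sum_erase _ _ hp,
      fmulXSummand_Ypartial_self hk i g (Finsupp.mem_support_iff.1 hp)]
    exact congrArg _ (Finset.sum_congr rfl fun k' hk' =>
      fmulXSummand_Ypartial_of_ne (Finset.ne_of_mem_erase hk') i g p)
  · rw [Finset.erase_eq_of_notMem hp, show (p.y k : ℂ) = 0 by simpa using hp, zero_mul, zero_add]
    exact Finset.sum_congr rfl fun k' hk' =>
      fmulXSummand_Ypartial_of_ne (ne_of_mem_of_not_mem hk' hp) i g p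

theorem Ypartial_FmulX_apply {k : Fin D → ℤ} (hk : F.InSupport k) (i : Fin D)
    (g : GMIdx D m → ℂ) (p : GMIdx D m) :
    Ypartial k (FmulX F ς i g) p = ((p.y k + 1 : ℕ) : ℂ) * (k i * Wmul F ς k g p) +
      ∑ k' ∈ p.y.support.erase k, ((p.y k + 1 : ℕ) : ℂ) *
        fmulXSummand F ς i g {p with y := p.y + Finsupp.single k 1} k' := by
  have hsupp : (p.y + Finsupp.single k 1).support = insert k p.y.support := by
    rw [Finsupp.support_add_eq_union, Finsupp.support_single _ one_ne_zero,
      Finset.union_singleton]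
  rw [Ypartial, FmulX_apply, hsupp, ← Finset.add_sum_erase _ _ (Finset.mem_insert_self _ _),
    Finset.erase_insert_eq_erase, mul_add, Finset.mul_sum, fmulXSummand_add_single_self hk]

theorem Ypartial_FmulX {k : Fin D → ℤ} (hk : F.InSupport k) (i : Fin D) (g : GMIdx D m → ℂ) :
    Ypartial k (FmulX F ς i g) = FmulX F ς i (Ypartial k g) + (k i : ℂ) • Wmul F ς k g := by
  funext p
  rw [Pi.add_apply, Ypartial_FmulX_apply hk, FmulX_Ypartial_apply hk, Pi.smul_apply, smul_eq_mul]
  push_cast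
  ring

theorem Xlog_Wmul (i : Fin D) (k : Fin D → ℤ) (g : GMIdx D m → ℂ) :
    Xlog i (Wmul F ς k g) = Wmul F ς k (Xlog i g) + (k i : ℂ) • Wmul F ς k g := by
  funext p
  simp only [Xlog, Wmul, Pi.add_apply, Pi.smul_apply, Pi.sub_apply, smul_eq_mul]
  push_cast
  ring

theorem commutator_ypartialEnd_fmulXEnd {k : Fin D → ℤ} (hk : F.InSupport k) (i : Fin D) :
    ypartialEnd k * fmulXEnd F ς i - fmulXEnd F ς i * ypartialEnd k =
      xlogEnd i * wmulEnd F ς k - wmulEnd F ς k * xlogEnd i :=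
  AddMonoidHom.ext fun g => by
    change Ypartial k (FmulX F ς i g) - FmulX F ς i (Ypartial k g) =
      Xlog i (Wmul F ς k g) - Wmul F ς k (Xlog i g)
    rw [Ypartial_FmulX hk, Xlog_Wmul, add_sub_cancel_left, add_sub_cancel_left]

theorem commute_znablaEnd_dtwEnd {k : Fin D → ℤ} (hk : F.InSupport k) (i : Fin D) :
    Commute (znablaEnd F ς k) (dtwEnd F ς i) :=
  commute_mul_add_mul_add_sub (commute_zmulEnd_ypartialEnd k) (commute_zmulEnd_wmulEnd k)
    (commute_zmulEnd_xlogEnd i) (commute_zmulEnd_fmulXEnd i) (commute_zmulEnd_lmulEnd i)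
    (commute_ypartialEnd_xlogEnd k i) (commute_ypartialEnd_lmulEnd k i)
    (commute_wmulEnd_fmulXEnd k i) (commute_wmulEnd_lmulEnd k i) (commutator_ypartialEnd_fmulXEnd hk i)

theorem commute_qmulEnd_dtwEnd (d : Fin m → ℤ) (i : Fin D) :
    Commute (qmulEnd d) (dtwEnd F ς i) :=
  (((commute_qmulEnd_zmulEnd d).mul_right (commute_qmulEnd_xlogEnd d i)).add_right
    (commute_qmulEnd_fmulXEnd d i)).sub_right (commute_qmulEnd_lmulEnd d i)

theorem ZNabla_Dtw {k : Fin D → ℤ} (hk : F.InSupport k) (i : Fin D) (g : GMIdx D m → ℂ) :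
    ZNabla F ς k (Dtw F ς i g) = Dtw F ς i (ZNabla F ς k g) :=
  DFunLike.congr_fun (commute_znablaEnd_dtwEnd hk i).eq g

theorem Dtw_Qmul (d : Fin m → ℤ) (i : Fin D) (g : GMIdx D m → ℂ) :
    Dtw F ς i (Qmul d g) = Qmul d (Dtw F ς i g) :=
  DFunLike.congr_fun (commute_qmulEnd_dtwEnd d i).eq.symm g

theorem Ypartial_wB (k l : Fin D → ℤ) : Ypartial k (wB F ς l) = 0 := by
  funext p
  have hy : p.y + Finsupp.single k 1 ≠ 0 := by simp
  simp [Ypartial, wB, delta, hy]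

theorem Wmul_wB (k l : Fin D → ℤ) :
    Wmul F ς k (wB F ς l) = Qmul (F.dEff k l) (wB F ς (k + l)) := by
  funext p
  simp only [Wmul, Qmul, wB, delta, GMIdx.mk.injEq, sub_eq_iff_eq_add]
  rw [add_comm (F.beta ς l), F.beta_add_beta, add_comm l]

theorem ZNabla_wB (k l : Fin D → ℤ) :
    ZNabla F ς k (wB F ς l) = Qmul (F.dEff k l) (wB F ς (k + l)) := by
  rw [ZNabla, Ypartial_wB, Wmul_wB, add_eq_right]
  exact map_zero zmulEnd

end Operators

end GMIdx

open GMIdx in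
theorem gauss_manin_connection_well_defined_general {D m : ℕ} (F : SmoothFan D m)
    (ς : (Fin D → ℤ) →+ (Fin m → ℤ)) :
    (∀ (i : Fin D) (k l : Fin D → ℤ), F.InSupport k → F.InSupport l →
      ZNabla F ς k (Dtw F ς i (wB F ς l)) =
        Qmul (F.dEff k l) (Dtw F ς i (wB F ς (k + l)))) ∧
    (∀ k : Fin D → ℤ, F.InSupport k → ∀ h ∈ ImD F ς, ZNabla F ς k h ∈ ImD F ς) := by
  refine ⟨fun i k l hk _ => ?_, fun k hk _ ⟨g, hg⟩ => ⟨fun j => ZNabla F ς k (g j), ?_⟩⟩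
  · rw [ZNabla_Dtw hk, ZNabla_wB, Dtw_Qmul]
  · rw [hg, ← coe_znablaEnd, map_sum]
    exact Finset.sum_congr rfl fun j _ => ZNabla_Dtw hk j (g j)

open GMIdx in
/-- the Gauss–Manin connection (characterized by the Leibniz rule,
`∇_{∂/∂y_k} w^{Ψ(l)}ω = z⁻¹ w^{Ψ(k)+Ψ(l)}ω` and flatness) is well defined: the operator
`z∇_{∂/∂y_k}` preserves the image of `zd + dF_λ∧`; explicitly,
`z∇_{∂/∂y_k}[(zd + dF_λ∧) w^{Ψ(l)}ω_i] = Q^{d(k,l)} (zd + dF_λ∧) w^{Ψ(k+l)}ω_i`. -/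
theorem gauss_manin_connection_well_defined {D m : ℕ} (F : SmoothFan D m)
    (I₀ : Finset (Fin m)) (hI₀ : I₀ ∈ F.cones) (hcard : I₀.card = D)
    (ς : (Fin D → ℤ) →+ (Fin m → ℤ))
    (hsec : ∀ v : Fin D → ℤ, F.toN (ς v) = v)
    (hς : ∀ i ∈ I₀, ς (F.b i) = Pi.single i 1) :
    (∀ (i : Fin D) (k l : Fin D → ℤ), F.InSupport k → F.InSupport l →
      ZNabla F ς k (Dtw F ς i (wB F ς l)) =
        Qmul (F.dEff k l) (Dtw F ς i (wB F ς (k + l)))) ∧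
    (∀ k : Fin D → ℤ, F.InSupport k → ∀ h ∈ ImD F ς, ZNabla F ς k h ∈ ImD F ς) :=
  gauss_manin_connection_well_defined_general F ς
end

section
/- Let R be a complete Hausdorff linearly topologized ring, I ⊆ R an ideal such that every neighbourhood of 0 contains some power I^n, and let V be a continuous derivation of R[[x]] (countably many variables) with V(x_n) ∈ I[[x]] for all n and V(x_n) → 0. Then for every φ ∈ R[[x]], the series exp(V)(φ) = Σ_{k≥0} V^k(φ)/k! converges in R[[x]], and φ ↦ exp(V)(φ) is a continuous ring automorphism of R[[x]] with inverse exp(−V). -/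
open Filter

/-- The coefficient-wise (product) topology on multivariate formal power series,
matching the paper's topology on `R[[x]]` (coefficient-wise convergence). -/
noncomputable instance mvPowerSeriesPiTopology (σ R : Type*) [TopologicalSpace R] :
    TopologicalSpace (MvPowerSeries σ R) :=
  inferInstanceAs (TopologicalSpace ((σ →₀ ℕ) → R))

noncomputable instance powerSeriesPiTopology (R : Type*) [TopologicalSpace R] :
    TopologicalSpace (PowerSeries R) :=
  inferInstanceAs (TopologicalSpace (MvPowerSeries Unit R))

/-- `R` is linearly topologized: the ideals contained in a given neighbourhood of `0`
form a fundamental system of neighbourhoods of `0`. -/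
def LinearlyTopologized (R : Type*) [Ring R] [TopologicalSpace R] : Prop :=
  ∀ S ∈ nhds (0 : R), ∃ I : Ideal R, (I : Set R) ⊆ S ∧ (I : Set R) ∈ nhds (0 : R)

/-!
A continuous derivation `D` sending every variable into `I[[X]]` maps `J[[X]]` into
`(closure (J * I))[[X]]`, so `Dᵏ φ / k!` has all its coefficients in `closure (Iᵏ)`. As the powers
of `I` tend to `0` in the complete nonarchimedean ring `R`, every family whose `i`-th term has
coefficients in `closure (I ^ w i)` with `w → ∞` is summable; this applies to `Dᵏ φ / k!` and to
the double families `(Dⁱ φ / i!) (Dʲ ψ / j!)` and `(-D)ⁱ (Dʲ φ / j!) / i!`. Summed along the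
antidiagonals `i + j = n`, the first double family gives `exp D (φ ψ)` by the Leibniz rule, and
the second gives `φ`, because `∑_{i+j=n} (-1)ⁱ / (i! j!)` is the coefficient of `Xⁿ` in
`e^{-X} e^X = 1`.
Continuity of `exp D` holds because the tails of the series lie in `closure (I ^ N)` uniformly
in `φ`.
-/

section

-- The scoped instances of `WithPiTopology` agree definitionally with `mvPowerSeriesPiTopology`;
-- they stay inside this section so that the main theorem is stated with the latter.
open Finset MvPowerSeries MvPowerSeries.WithPiTopology Topology

theorem sum_antidiagonal_neg_one_pow_mul_inv_factorial (n : ℕ) :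
    ∑ ij ∈ antidiagonal n, (-1 : ℚ) ^ ij.1 * (ij.1.factorial : ℚ)⁻¹ * (ij.2.factorial : ℚ)⁻¹ =
      if n = 0 then 1 else 0 := by
  have h := congr_arg (PowerSeries.coeff n) (PowerSeries.exp_mul_exp_neg_eq_one (A := ℚ))
  rw [mul_comm, PowerSeries.coeff_mul, PowerSeries.coeff_one] at h
  simpa [PowerSeries.evalNegHom, PowerSeries.coeff_rescale, PowerSeries.coeff_exp, mul_assoc]
    using h

theorem tendsto_add_cofinite_atTop : Tendsto (fun p : ℕ × ℕ ↦ p.1 + p.2) cofinite atTop := by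
  rw [← Nat.cofinite_eq_atTop]
  exact Tendsto.cofinite_of_finite_preimage_singleton fun n ↦
    (antidiagonal n).finite_toSet.subset fun p hp ↦ mem_antidiagonal.2 hp

theorem Summable.tsum_eq_tsum_sum_antidiagonal {A α : Type*} [AddCommMonoid A] [HasAntidiagonal A]
    [AddCommMonoid α] [TopologicalSpace α] [ContinuousAdd α] [T3Space α] {f : A × A → α}
    (hf : Summable f) : ∑' p, f p = ∑' n, ∑ p ∈ antidiagonal n, f p := by
  rw [← HasAntidiagonal.sigmaAntidiagonalEquivProd.tsum_eq]
  refine (Summable.tsum_sigma' (f := f ∘ HasAntidiagonal.sigmaAntidiagonalEquivProd)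
    (fun n ↦ (hasSum_fintype _).summable)
    (HasAntidiagonal.sigmaAntidiagonalEquivProd.summable_iff.2 hf)).trans (tsum_congr fun n ↦ ?_)
  exact (tsum_fintype _).trans (sum_finset_coe (fun p ↦ f p) _)

namespace Derivation

variable {R A : Type*} [CommRing R] [CommRing A] [Algebra R A] (D : Derivation R A A)

theorem iterate_map_mul (n : ℕ) (a b : A) :
    D^[n] (a * b) = ∑ ij ∈ antidiagonal n, n.choose ij.1 • (D^[ij.1] a * D^[ij.2] b) := by
  induction n with
  | zero => simp
  | succ n ih =>
    rw [sum_antidiagonal_choose_succ_nsmul (fun i j ↦ D^[i] a * D^[j] b) n]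
    simp only [Function.iterate_succ_apply', ih, map_sum, map_nsmul, leibniz, smul_eq_mul,
      smul_add, sum_add_distrib, add_right_inj]
    refine sum_congr rfl fun ⟨i, j⟩ hij ↦ ?_
    rw [n.choose_symm_of_eq_add (mem_antidiagonal.1 hij).symm, mul_comm]

variable [Algebra ℚ A]

theorem iterate_map_rat_smul (k : ℕ) (q : ℚ) (a : A) : D^[k] (q • a) = q • D^[k] a := by
  rw [← coeFn_coe, ← Module.End.coe_pow]
  exact map_rat_smul _ q a

theorem iterate_neg_apply (k : ℕ) (a : A) : (⇑(-D))^[k] a = (-1 : ℚ) ^ k • D^[k] a := by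
  induction k with
  | zero => simp
  | succ k ih =>
    rw [Function.iterate_succ_apply', Function.iterate_succ_apply', ih, neg_apply,
      ← coeFn_coe, map_rat_smul, pow_succ, mul_smul, neg_one_smul, smul_neg]

noncomputable def expTerm (a : A) (k : ℕ) : A := (k.factorial : ℚ)⁻¹ • D^[k] a

theorem expTerm_add (a b : A) (k : ℕ) : D.expTerm (a + b) k = D.expTerm a k + D.expTerm b k := by
  rw [expTerm, iterate_map_add, smul_add, expTerm, expTerm]

theorem expTerm_one (k : ℕ) : D.expTerm 1 k = if k = 0 then 1 else 0 := by
  cases k with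
  | zero => simp [expTerm]
  | succ k => simp [expTerm, Function.iterate_succ_apply, map_one_eq_zero]

theorem expTerm_mul (a b : A) (n : ℕ) :
    D.expTerm (a * b) n = ∑ ij ∈ antidiagonal n, D.expTerm a ij.1 * D.expTerm b ij.2 := by
  rw [expTerm, iterate_map_mul, smul_sum]
  refine sum_congr rfl fun ⟨i, j⟩ hij ↦ ?_
  obtain rfl := mem_antidiagonal.1 hij
  rw [expTerm, expTerm, smul_mul_smul_comm, ← Nat.cast_smul_eq_nsmul ℚ, smul_smul]
  congr 1
  have h := Nat.choose_mul_factorial_mul_factorial (Nat.le_add_right i j)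
  rw [Nat.add_sub_cancel_left] at h
  field_simp
  exact_mod_cast h

theorem sum_antidiagonal_expTerm_neg_expTerm (a : A) (n : ℕ) :
    ∑ ij ∈ antidiagonal n, (-D).expTerm (D.expTerm a ij.2) ij.1 = if n = 0 then a else 0 := by
  have hterm : ∀ ij ∈ antidiagonal n, (-D).expTerm (D.expTerm a ij.2) ij.1 =
      ((-1 : ℚ) ^ ij.1 * (ij.1.factorial : ℚ)⁻¹ * (ij.2.factorial : ℚ)⁻¹) • D^[n] a := by
    rintro ⟨i, j⟩ hij
    rw [← mem_antidiagonal.1 hij, expTerm, expTerm, iterate_neg_apply, iterate_map_rat_smul,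
      ← Function.iterate_add_apply, smul_smul, smul_smul]
    congr 1
    ring
  rw [sum_congr rfl hterm, ← sum_smul, sum_antidiagonal_neg_one_pow_mul_inv_factorial]
  split_ifs with h <;> simp [h]

noncomputable def exp [TopologicalSpace A] (a : A) : A := ∑' k, D.expTerm a k

theorem exp_one [TopologicalSpace A] : D.exp 1 = 1 := by
  simp only [exp, expTerm_one, tsum_ite_eq]

end Derivation

section ClosurePow

variable {R : Type*} [CommRing R] [TopologicalSpace R] [IsTopologicalRing R]

theorem Ideal.closure_mul_closure_le (I J : Ideal R) : I.closure * J.closure ≤ (I * J).closure :=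
  Ideal.mul_le.2 fun _ ha _ hb ↦
    map_mem_closure₂ continuous_mul ha hb fun _ ha' _ hb' ↦ Ideal.mul_mem_mul ha' hb'

theorem Ideal.closure_pow_mul_closure_pow_le (I : Ideal R) (j k : ℕ) :
    (I ^ j).closure * (I ^ k).closure ≤ (I ^ (j + k)).closure := by
  rw [pow_add]
  exact Ideal.closure_mul_closure_le _ _

theorem LinearlyTopologized.nonarchimedeanAddGroup (h : LinearlyTopologized R) :
    NonarchimedeanAddGroup R where
  is_nonarchimedean U hU := by
    obtain ⟨K, hKU, hK⟩ := h U hU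
    exact ⟨⟨K.toAddSubgroup, AddSubgroup.isOpen_of_mem_nhds _ hK⟩, hKU⟩

variable {I : Ideal R} (hI : ∀ S ∈ 𝓝 (0 : R), ∃ n : ℕ, ((I ^ n : Ideal R) : Set R) ⊆ S)
include hI

theorem eventually_closure_pow_subset {S : Set R} (hS : S ∈ 𝓝 0) :
    ∀ᶠ n in atTop, ((I ^ n).closure : Set R) ⊆ S := by
  obtain ⟨T, ⟨hT, hTc⟩, hTS⟩ := (closed_nhds_basis (0 : R)).mem_iff.1 hS
  obtain ⟨n, hn⟩ := hI T hT
  filter_upwards [eventually_ge_atTop n] with m hm x hx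
  exact hTS (closure_minimal (fun y hy ↦ hn (Ideal.pow_le_pow_right hm hy)) hTc hx)

theorem tendsto_cofinite_zero_of_mem_closure_pow {α : Type*} {f : α → R} {w : α → ℕ}
    (hf : ∀ i, f i ∈ (I ^ w i).closure) (hw : Tendsto w cofinite atTop) :
    Tendsto f cofinite (𝓝 0) := fun _ hS ↦
  (hw.eventually (eventually_closure_pow_subset hI hS)).mono fun i hi ↦ hi (hf i)

end ClosurePow

section Complete

variable {R : Type*} [CommRing R] [UniformSpace R] [IsUniformAddGroup R] [CompleteSpace R]
  [IsTopologicalRing R] (hlin : LinearlyTopologized R)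
  {I : Ideal R} (hI : ∀ S ∈ 𝓝 (0 : R), ∃ n : ℕ, ((I ^ n : Ideal R) : Set R) ⊆ S)
include hlin hI

theorem summable_of_mem_closure_pow {α : Type*} {f : α → R} {w : α → ℕ}
    (hf : ∀ i, f i ∈ (I ^ w i).closure) (hw : Tendsto w cofinite atTop) : Summable f :=
  have := hlin.nonarchimedeanAddGroup
  NonarchimedeanAddGroup.summable_of_tendsto_cofinite_zero
    (tendsto_cofinite_zero_of_mem_closure_pow hI hf hw)

theorem continuous_tsum_of_mem_closure_pow [T2Space R] {X : Type*} [TopologicalSpace X]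
    {F : ℕ → X → R} (hFc : ∀ k, Continuous (F k)) (hF : ∀ k x, F k x ∈ (I ^ k).closure) :
    Continuous fun x ↦ ∑' k, F k x := by
  have htail (N : ℕ) (x : X) : ∑ k ∈ range N, F k x - ∑' k, F k x ∈ (I ^ N).closure := by
    have hsum : Summable (F · x) := summable_of_mem_closure_pow hlin hI (hF · x)
      (Nat.cofinite_eq_atTop ▸ tendsto_id)
    rw [← hsum.sum_add_tsum_nat_add N, sub_add_cancel_left, neg_mem_iff]
    exact tsum_mem isClosed_closure fun k ↦
      closure_mono (Ideal.pow_le_pow_right (by omega)) (hF (k + N) x)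
  refine TendstoUniformly.continuous ?_ (Frequently.of_forall (f := atTop) fun N ↦
    continuous_finsetSum (range N) fun k _ ↦ hFc k)
  rw [IsTopologicalAddGroup.tendstoUniformly_iff _ _ _ IsUniformAddGroup.rightUniformSpace_eq]
  intro S hS
  filter_upwards [eventually_closure_pow_subset hI hS] with N hN x using hN (htail N x)

end Complete

namespace MvPowerSeries

variable {σ R : Type*} [CommRing R]

/-- The ideal `J[[X]]`. -/
def coeffsIn (J : Ideal R) : Ideal (MvPowerSeries σ R) where
  carrier := {f | ∀ d, coeff d f ∈ J}
  add_mem' hf hg d := by simpa only [map_add] using J.add_mem (hf d) (hg d)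
  zero_mem' d := by simp
  smul_mem' c f hf d := by
    classical
    rw [smul_eq_mul, coeff_mul]
    exact sum_mem fun p _ ↦ J.mul_mem_left _ (hf p.2)

variable {J K : Ideal R} {f g : MvPowerSeries σ R}

theorem coeffsIn_mono (h : J ≤ K) : (coeffsIn J : Ideal (MvPowerSeries σ R)) ≤ coeffsIn K :=
  fun _ hf d ↦ h (hf d)

theorem mul_mem_coeffsIn_mul (hf : f ∈ coeffsIn J) (hg : g ∈ coeffsIn K) :
    f * g ∈ coeffsIn (J * K) := fun d ↦ by
  classical
  rw [coeff_mul]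
  exact sum_mem fun p _ ↦ Ideal.mul_mem_mul (hf p.1) (hg p.2)

theorem smul_mem_coeffsIn_mul {a : R} (ha : a ∈ J) (hg : g ∈ coeffsIn K) :
    a • g ∈ coeffsIn (J * K) := fun d ↦ by
  rw [coeff_smul]
  exact Ideal.mul_mem_mul ha (hg d)

variable [TopologicalSpace R]

theorem isClosed_coeffsIn (hJ : IsClosed (J : Set R)) :
    IsClosed ((coeffsIn J : Ideal (MvPowerSeries σ R)) : Set (MvPowerSeries σ R)) := by
  change IsClosed {f : MvPowerSeries σ R | ∀ d, coeff d f ∈ J}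
  rw [Set.ofPred_forall]
  exact isClosed_iInter fun d ↦ hJ.preimage (continuous_coeff R d)

variable [IsTopologicalRing R]

theorem mem_coeffsIn_closure_pow_zero (I : Ideal R) (f : MvPowerSeries σ R) :
    f ∈ coeffsIn (I ^ 0).closure := fun _ ↦ subset_closure (by simp)

end MvPowerSeries

theorem MvPowerSeries.summable_of_mem_coeffsIn_closure_pow {σ R : Type*} [CommRing R]
    [UniformSpace R] [IsUniformAddGroup R] [CompleteSpace R] [IsTopologicalRing R]
    (hlin : LinearlyTopologized R) {I : Ideal R}
    (hI : ∀ S ∈ 𝓝 (0 : R), ∃ n : ℕ, ((I ^ n : Ideal R) : Set R) ⊆ S) {α : Type*}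
    {F : α → MvPowerSeries σ R} {w : α → ℕ} (hF : ∀ i, F i ∈ coeffsIn (I ^ w i).closure)
    (hw : Tendsto w cofinite atTop) : Summable F :=
  summable_iff_summable_coeff.2 fun d ↦ summable_of_mem_closure_pow hlin hI (fun i ↦ hF i d) hw

namespace Derivation

section Filtration

variable {σ R : Type*} [CommRing R] (D : Derivation R (MvPowerSeries σ R) (MvPowerSeries σ R))

theorem map_monomial_one_mem {𝔍 : Ideal (MvPowerSeries σ R)} (hX : ∀ i, D (X i) ∈ 𝔍)
    (d : σ →₀ ℕ) : D (monomial d 1) ∈ 𝔍 := by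
  induction d using Finsupp.induction with
  | zero => simp [monomial_zero_one]
  | single_add i n d _ _ ih =>
    rw [← mul_one (1 : R), ← monomial_mul_monomial, ← X_pow_eq, leibniz, leibniz_pow]
    exact add_mem (𝔍.smul_mem _ ih) (𝔍.smul_mem _ (nsmul_mem (𝔍.smul_mem _ (hX i)) n))

variable [TopologicalSpace R]

theorem map_mem_coeffsIn (hD : Continuous D) {I J J' : Ideal R} (hX : ∀ i, D (X i) ∈ coeffsIn I)
    (hJ' : IsClosed (J' : Set R)) (hJJ' : J * I ≤ J') {f : MvPowerSeries σ R}
    (hf : f ∈ coeffsIn J) : D f ∈ coeffsIn J' := by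
  have hsum : HasSum (fun d ↦ coeff d f • D (monomial d 1)) (D f) := by
    have hmon (d : σ →₀ ℕ) : monomial d (coeff d f) = coeff d f • monomial d 1 := by
      rw [← LinearMap.map_smul, smul_eq_mul, mul_one]
    simpa only [Function.comp_def, hmon, D.map_smul] using
      (hasSum_of_monomials_self f).map D hD
  exact (isClosed_coeffsIn hJ').mem_of_tendsto hsum (Eventually.of_forall fun s ↦ sum_mem
    fun d _ ↦ coeffsIn_mono hJJ' (smul_mem_coeffsIn_mul (hf d) (D.map_monomial_one_mem hX d)))

variable [IsTopologicalRing R]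

theorem iterate_mem_coeffsIn_closure_pow (hD : Continuous D) {I : Ideal R}
    (hX : ∀ i, D (X i) ∈ coeffsIn I) {f : MvPowerSeries σ R} {j : ℕ}
    (hf : f ∈ coeffsIn (I ^ j).closure) (k : ℕ) : D^[k] f ∈ coeffsIn (I ^ (k + j)).closure := by
  induction k with
  | zero => simpa using hf
  | succ k ih =>
    rw [Function.iterate_succ_apply', add_right_comm]
    refine D.map_mem_coeffsIn hD hX isClosed_closure (Ideal.mul_le.2 fun a ha b hb ↦ ?_) ih
    exact I.closure_pow_mul_closure_pow_le _ 1 (Ideal.mul_mem_mul ha (subset_closure (by simpa)))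

end Filtration

section Small

variable {σ R : Type*} [CommRing R] [TopologicalSpace R] {I : Ideal R}
  {D : Derivation R (MvPowerSeries σ R) (MvPowerSeries σ R)}

variable (I D) in
structure IsSmall : Prop where
  continuous : Continuous D
  map_X_mem : ∀ i, D (X i) ∈ coeffsIn I

variable [IsTopologicalRing R]

theorem IsSmall.neg (hD : D.IsSmall I) : (-D).IsSmall I where
  continuous := by
    rw [coe_neg]
    exact hD.continuous.neg
  map_X_mem i := by
    rw [neg_apply]
    exact neg_mem (hD.map_X_mem i)

variable [Algebra ℚ R]

theorem IsSmall.continuous_expTerm (hD : D.IsSmall I) (k : ℕ) : Continuous (D.expTerm · k) :=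
  (continuous_const_smul _).comp (hD.continuous.iterate k)

theorem IsSmall.expTerm_mem (hD : D.IsSmall I) {f : MvPowerSeries σ R} {j : ℕ}
    (hf : f ∈ coeffsIn (I ^ j).closure) (k : ℕ) : D.expTerm f k ∈ coeffsIn (I ^ (k + j)).closure :=
  Submodule.smul_of_tower_mem _ _
    (D.iterate_mem_coeffsIn_closure_pow hD.continuous hD.map_X_mem hf k)

end Small

section Complete

variable {σ R : Type*} [CommRing R] [Algebra ℚ R] [UniformSpace R] [IsUniformAddGroup R]
  [CompleteSpace R] [IsTopologicalRing R] (hlin : LinearlyTopologized R)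
  {I : Ideal R} (hI : ∀ S ∈ 𝓝 (0 : R), ∃ n : ℕ, ((I ^ n : Ideal R) : Set R) ⊆ S)
  {D : Derivation R (MvPowerSeries σ R) (MvPowerSeries σ R)} (hD : D.IsSmall I)
include hlin hI hD

theorem IsSmall.hasSum_exp (f : MvPowerSeries σ R) : HasSum (D.expTerm f) (D.exp f) :=
  (summable_of_mem_coeffsIn_closure_pow hlin hI
    (fun k ↦ hD.expTerm_mem (mem_coeffsIn_closure_pow_zero I f) k)
    (Nat.cofinite_eq_atTop ▸ tendsto_id)).hasSum

variable [T2Space R]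

theorem IsSmall.exp_add (f g : MvPowerSeries σ R) : D.exp (f + g) = D.exp f + D.exp g := by
  simp only [exp, expTerm_add]
  exact ((hD.hasSum_exp hlin hI f).add (hD.hasSum_exp hlin hI g)).tsum_eq

theorem IsSmall.exp_mul (f g : MvPowerSeries σ R) : D.exp (f * g) = D.exp f * D.exp g := by
  have hfg : Summable fun p : ℕ × ℕ ↦ D.expTerm f p.1 * D.expTerm g p.2 :=
    summable_of_mem_coeffsIn_closure_pow hlin hI (fun p ↦ coeffsIn_mono
      (I.closure_pow_mul_closure_pow_le p.1 p.2) (mul_mem_coeffsIn_mul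
        (hD.expTerm_mem (mem_coeffsIn_closure_pow_zero I f) p.1)
        (hD.expTerm_mem (mem_coeffsIn_closure_pow_zero I g) p.2))) tendsto_add_cofinite_atTop
  rw [exp, exp, exp, (hD.hasSum_exp hlin hI f).summable.tsum_mul_tsum_eq_tsum_sum_antidiagonal
    (hD.hasSum_exp hlin hI g).summable hfg]
  simp only [expTerm_mul]

theorem IsSmall.exp_neg_exp (f : MvPowerSeries σ R) : (-D).exp (D.exp f) = f := by
  set c : ℕ × ℕ → MvPowerSeries σ R := fun p ↦ (-D).expTerm (D.expTerm f p.2) p.1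
  have hc : Summable c := summable_of_mem_coeffsIn_closure_pow hlin hI
    (fun p ↦ hD.neg.expTerm_mem (hD.expTerm_mem (mem_coeffsIn_closure_pow_zero I f) p.2) p.1)
    tendsto_add_cofinite_atTop
  have hrow (i : ℕ) : HasSum (fun j ↦ c (i, j)) ((-D).expTerm (D.exp f) i) :=
    (hD.hasSum_exp hlin hI f).map
      (AddMonoidHom.mk' ((-D).expTerm · i) fun a b ↦ expTerm_add _ a b i)
      (hD.neg.continuous_expTerm i)
  calc (-D).exp (D.exp f) = ∑' i, ∑' j, c (i, j) := tsum_congr fun i ↦ (hrow i).tsum_eq.symm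
    _ = ∑' p, c p := (hc.tsum_prod' fun i ↦ (hrow i).summable).symm
    _ = ∑' n, if n = 0 then f else 0 := by
      rw [hc.tsum_eq_tsum_sum_antidiagonal]
      exact tsum_congr (D.sum_antidiagonal_expTerm_neg_expTerm f)
    _ = f := tsum_ite_eq 0 fun _ ↦ f

theorem IsSmall.continuous_exp : Continuous (D.exp : MvPowerSeries σ R → MvPowerSeries σ R) := by
  refine continuous_pi fun d ↦ ?_
  have hcoeff : (fun f ↦ coeff d (D.exp f)) = fun f ↦ ∑' k, coeff d (D.expTerm f k) :=
    funext fun f ↦ ((hasSum_iff_hasSum_coeff.1 (hD.hasSum_exp hlin hI f)) d).tsum_eq.symm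
  change Continuous fun f ↦ coeff d (D.exp f)
  rw [hcoeff]
  exact continuous_tsum_of_mem_closure_pow hlin hI
    (fun k ↦ (continuous_coeff R d).comp (hD.continuous_expTerm k))
    fun k f ↦ hD.expTerm_mem (mem_coeffsIn_closure_pow_zero I f) k d

noncomputable def IsSmall.expRingHom : MvPowerSeries σ R →+* MvPowerSeries σ R :=
  RingHom.mk' ⟨⟨D.exp, D.exp_one⟩, hD.exp_mul hlin hI⟩ (hD.exp_add hlin hI)

end Complete

end Derivation

end

theorem exp_of_derivation_is_automorphism_general
    (R : Type*) [CommRing R] [Algebra ℚ R] [UniformSpace R] [IsUniformAddGroup R]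
    [CompleteSpace R] [T2Space R] [IsTopologicalRing R]
    (hlin : LinearlyTopologized R)
    (I : Ideal R)
    (hI : ∀ S ∈ nhds (0 : R), ∃ n : ℕ, ((I ^ n : Ideal R) : Set R) ⊆ S)
    (V : Derivation R (MvPowerSeries ℕ R) (MvPowerSeries ℕ R))
    (hVcont : Continuous V)
    (hVI : ∀ n : ℕ, ∀ d : ℕ →₀ ℕ, MvPowerSeries.coeff d (V (MvPowerSeries.X n)) ∈ I) :
    (∀ φ : MvPowerSeries ℕ R,
      ∃ s, HasSum (fun k : ℕ => ((k.factorial : ℚ)⁻¹) • (⇑V)^[k] φ) s) ∧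
    ∃ E E' : MvPowerSeries ℕ R →+* MvPowerSeries ℕ R,
      Continuous E ∧ Continuous E' ∧
      (∀ φ, HasSum (fun k : ℕ => ((k.factorial : ℚ)⁻¹) • (⇑V)^[k] φ) (E φ)) ∧
      (∀ φ, HasSum (fun k : ℕ => ((k.factorial : ℚ)⁻¹) • (⇑(-V))^[k] φ) (E' φ)) ∧
      E'.comp E = RingHom.id (MvPowerSeries ℕ R) ∧
      E.comp E' = RingHom.id (MvPowerSeries ℕ R) := by
  have hV : V.IsSmall I := ⟨hVcont, hVI⟩
  have hinv := hV.neg.exp_neg_exp hlin hI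
  rw [neg_neg] at hinv
  exact ⟨fun φ ↦ ⟨_, hV.hasSum_exp hlin hI φ⟩, hV.expRingHom hlin hI, hV.neg.expRingHom hlin hI,
    hV.continuous_exp hlin hI, hV.neg.continuous_exp hlin hI, hV.hasSum_exp hlin hI,
    hV.neg.hasSum_exp hlin hI, RingHom.ext (hV.exp_neg_exp hlin hI), RingHom.ext hinv⟩

/-- exponential of a small derivation.  Let `R` be a complete Hausdorff
linearly topologized ring (a ℚ-algebra), `I ⊆ R` an ideal such that every neighbourhood
of `0` contains some power `I^n`, and `V` a continuous derivation of `R[[x]]`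
(countably many variables) whose components `V(x_n)` have all coefficients in `I` and
tend to `0`.  Then for every `φ` the series `exp(V)(φ) = Σ_k V^k(φ)/k!` converges in
`R[[x]]`, and `φ ↦ exp(V)(φ)` is a continuous ring automorphism of `R[[x]]` whose
inverse is `exp(−V)`. -/
theorem exp_of_derivation_is_automorphism
    (R : Type*) [CommRing R] [Algebra ℚ R] [UniformSpace R] [IsUniformAddGroup R]
    [CompleteSpace R] [T2Space R] [IsTopologicalRing R]
    (hlin : LinearlyTopologized R)
    (I : Ideal R)
    (hI : ∀ S ∈ nhds (0 : R), ∃ n : ℕ, ((I ^ n : Ideal R) : Set R) ⊆ S)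
    (V : Derivation R (MvPowerSeries ℕ R) (MvPowerSeries ℕ R))
    (hVcont : Continuous V)
    (hVtend : Tendsto (fun n => V (MvPowerSeries.X n)) atTop (nhds 0))
    (hVI : ∀ n : ℕ, ∀ d : ℕ →₀ ℕ, MvPowerSeries.coeff d (V (MvPowerSeries.X n)) ∈ I) :
    (∀ φ : MvPowerSeries ℕ R,
      ∃ s, HasSum (fun k : ℕ => ((k.factorial : ℚ)⁻¹) • (⇑V)^[k] φ) s) ∧
    ∃ E E' : MvPowerSeries ℕ R →+* MvPowerSeries ℕ R,
      Continuous E ∧ Continuous E' ∧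
      (∀ φ, HasSum (fun k : ℕ => ((k.factorial : ℚ)⁻¹) • (⇑V)^[k] φ) (E φ)) ∧
      (∀ φ, HasSum (fun k : ℕ => ((k.factorial : ℚ)⁻¹) • (⇑(-V))^[k] φ) (E' φ)) ∧
      E'.comp E = RingHom.id (MvPowerSeries ℕ R) ∧
      E.comp E' = RingHom.id (MvPowerSeries ℕ R) :=
  exp_of_derivation_is_automorphism_general R hlin I hI V hVcont hVI
end
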